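/- The k-binomial equivalence relation is a congruence: if u1 ∼_k u2 and v1 ∼_k v2, then u1·v1 ∼_k u2·v2. -/

import Mathlib

/-!
An occurrence of `x` as a subword of `u ++ v` is an occurrence of a prefix of `x` in `u`
followed by an occurrence of the complementary suffix in `v`. Hence `binom (u ++ v) x` is
determined by the values of `binom u` and `binom v` on prefixes and suffixes of `x`, which are
no longer than `x`.
-/

/-- Number of occurrences of the second word as a (scattered) subword of the first. -/
def binom {α : Type*} [DecidableEq α] : List α → List α → ℕ
  | _, [] => 1
  | [], _ :: _ => 0
  | a :: u, b :: v => binom u (b :: v) + if a = b then binom u v else 0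

/-- k-binomial equivalence. -/
def BinEq {α : Type*} [DecidableEq α] (k : ℕ) (u v : List α) : Prop :=
  ∀ x : List α, x.length ≤ k → binom u x = binom v x

section Binom

variable {α : Type*} [DecidableEq α]

@[simp]
lemma binom_nil_right (w : List α) : binom w [] = 1 := by
  cases w <;> rfl

@[simp]
lemma binom_nil_cons (b : α) (x : List α) : binom [] (b :: x) = 0 := rfl

lemma binom_cons_cons (a b : α) (w x : List α) :
    binom (a :: w) (b :: x) = binom w (b :: x) + if a = b then binom w x else 0 := rfl

lemma binom_append (u v x : List α) :
    binom (u ++ v) x =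
      ∑ i ∈ Finset.range (x.length + 1), binom u (x.take i) * binom v (x.drop i) := by
  induction u generalizing x with
  | nil =>
    cases x with
    | nil => simp
    | cons b t => simp [Finset.sum_range_succ']
  | cons a u ih =>
    cases x with
    | nil => simp
    | cons b t =>
      rw [List.cons_append, binom_cons_cons, ih, ih, List.length_cons,
        Finset.sum_range_succ', Finset.sum_range_succ' _ (t.length + 1)]
      simp only [List.take_succ_cons, List.drop_succ_cons, List.take_zero, List.drop_zero,
        binom_nil_right, binom_cons_cons, add_mul, Finset.sum_add_distrib]
      split_ifs
      · ring
      · simp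

end Binom

theorem binEq_congruence {α : Type*} [DecidableEq α] (k : ℕ) (u₁ u₂ v₁ v₂ : List α)
    (hu : BinEq k u₁ u₂) (hv : BinEq k v₁ v₂) : BinEq k (u₁ ++ v₁) (u₂ ++ v₂) := by
  intro x hx
  rw [binom_append, binom_append]
  refine Finset.sum_congr rfl fun i _ => ?_
  rw [hu _ (by simp; omega), hv _ (by simp; omega)]
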